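/- arXiv:2012.05065 — 7 statements merged into one kernel-verified Lean document; each statement's English description precedes it below -/
import Mathlib

section
/- Let A : Fin n₁ → Fin r → Fin n₃ → ℂ and B : Fin r → Fin n₂ → Fin n₃ → ℂ. For every k ∈ Fin n₃, the k-th mode-3 DFT frontal slice of the mode-3 t-product A *₃ B equals the matrix product of the k-th DFT frontal slices of A and B: for all i, j, Σ_{t=0}^{n₃−1} exp(−2π·I·k·t/n₃)·(A *₃ B)(i,j,t) = Σ_{p=0}^{r−1} (Σ_{s=0}^{n₃−1} exp(−2π·I·k·s/n₃)·A(i,p,s))·(Σ_{t=0}^{n₃−1} exp(−2π·I·k·t/n₃)·B(p,j,t)). -/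
open Complex Finset

lemma dft_char_add {n₃ : ℕ} (k a b : Fin n₃) :
    Complex.exp (-2 * Real.pi * Complex.I * (k : ℕ) * ((a + b : Fin n₃) : ℕ) / (n₃ : ℕ))
      = Complex.exp (-2 * Real.pi * Complex.I * (k : ℕ) * (a : ℕ) / (n₃ : ℕ)) *
        Complex.exp (-2 * Real.pi * Complex.I * (k : ℕ) * (b : ℕ) / (n₃ : ℕ)) := by
  have hn : (n₃ : ℂ) ≠ 0 := by
    exact_mod_cast Nat.pos_of_ne_zero (fun h => by subst h; exact k.elim0) |>.ne'
  set q : ℕ := ((a : ℕ) + (b : ℕ)) / n₃ with hq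
  have hval : ((a + b : Fin n₃) : ℕ) = (a : ℕ) + (b : ℕ) - n₃ * q := by
    have := Nat.div_add_mod ((a : ℕ) + (b : ℕ)) n₃
    simp [Fin.add_def, Fin.val_add, hq]
    omega
  have hle : n₃ * q ≤ (a : ℕ) + b := Nat.mul_div_le _ _
  have hcast : (((a + b : Fin n₃) : ℕ) : ℂ) = ((a : ℕ) : ℂ) + ((b : ℕ) : ℂ) - (n₃ : ℂ) * (q : ℂ) := by
    rw [hval]
    push_cast [hle]
    ring
  rw [← Complex.exp_add]
  have : -2 * Real.pi * Complex.I * (k : ℕ) * ((a + b : Fin n₃) : ℕ) / (n₃ : ℕ)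
      = (-2 * Real.pi * Complex.I * (k : ℕ) * (a : ℕ) / (n₃ : ℕ)
         + -2 * Real.pi * Complex.I * (k : ℕ) * (b : ℕ) / (n₃ : ℕ))
        + (((k : ℕ) * q : ℤ) : ℂ) * (2 * Real.pi * Complex.I) := by
    rw [hcast]
    push_cast
    field_simp
    ring
  rw [this, Complex.exp_add, Complex.exp_int_mul_two_pi_mul_I, mul_one]

/-- The mode-3 DFT turns the mode-3 t-product into slice-wise matrix products:
the `k`-th DFT frontal slice of `A *₃ B` is the product of the `k`-th DFT frontal
slices of `A` and `B`. -/
theorem mode3_tprod_dft_slice (n₁ n₂ n₃ r : ℕ)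
    (A : Fin n₁ → Fin r → Fin n₃ → ℂ) (B : Fin r → Fin n₂ → Fin n₃ → ℂ)
    (k : Fin n₃) (i : Fin n₁) (j : Fin n₂) :
    (∑ t : Fin n₃, Complex.exp (-2 * Real.pi * Complex.I * (k : ℕ) * (t : ℕ) / (n₃ : ℕ)) *
        (∑ p : Fin r, ∑ s : Fin n₃, A i p s * B p j (t - s)))
      = ∑ p : Fin r,
          (∑ s : Fin n₃,
              Complex.exp (-2 * Real.pi * Complex.I * (k : ℕ) * (s : ℕ) / (n₃ : ℕ)) * A i p s) *
          (∑ t : Fin n₃,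
              Complex.exp (-2 * Real.pi * Complex.I * (k : ℕ) * (t : ℕ) / (n₃ : ℕ)) * B p j t) := by
  haveI : NeZero n₃ := ⟨fun h => by subst h; exact k.elim0⟩
  set f : Fin n₃ → ℂ := fun t => Complex.exp (-2 * Real.pi * Complex.I * (k : ℕ) * (t : ℕ) / (n₃ : ℕ)) with hf
  have key : ∀ (p : Fin r) (s : Fin n₃),
      (∑ t : Fin n₃, f t * (A i p s * B p j (t - s)))
        = (f s * A i p s) * ∑ u : Fin n₃, f u * B p j u := by
    intro p s
    calc (∑ t : Fin n₃, f t * (A i p s * B p j (t - s)))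
        = ∑ u : Fin n₃, f (u + s) * (A i p s * B p j u) := by
          rw [← Equiv.sum_comp (Equiv.addRight s) (fun t => f t * (A i p s * B p j (t - s)))]
          simp [Equiv.coe_addRight]
      _ = (f s * A i p s) * ∑ u : Fin n₃, f u * B p j u := by
          rw [Finset.mul_sum]
          refine Finset.sum_congr rfl fun u _ => ?_
          simp only [hf]
          rw [dft_char_add k u s]
          ring
  calc (∑ t : Fin n₃, f t * (∑ p : Fin r, ∑ s : Fin n₃, A i p s * B p j (t - s)))
      = ∑ p : Fin r, ∑ s : Fin n₃, ∑ t : Fin n₃, f t * (A i p s * B p j (t - s)) := by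
        simp_rw [Finset.mul_sum]
        rw [Finset.sum_comm]
        exact Finset.sum_congr rfl fun p _ => Finset.sum_comm
    _ = ∑ p : Fin r, ∑ s : Fin n₃, (f s * A i p s) * ∑ u : Fin n₃, f u * B p j u := by
        exact Finset.sum_congr rfl fun p _ => Finset.sum_congr rfl fun s _ => key p s
    _ = _ := by
        refine Finset.sum_congr rfl fun p _ => ?_
        rw [← Finset.sum_mul]
end

section
/- Let A : Fin n₁ → Fin r → Fin n₃ → ℂ and B : Fin r → Fin n₂ → Fin n₃ → ℂ, and let F = A *₃ B be their mode-3 t-product. Then the tubal rank of F is at most the minimum of the tubal ranks of A and B: max_{k ∈ Fin n₃} rank(F̂^{(k)}) ≤ min( max_{k ∈ Fin n₃} rank(Â^{(k)}), max_{k ∈ Fin n₃} rank(B̂^{(k)}) ), where T̂^{(k)} denotes the k-th mode-3 DFT frontal slice of T and rank is matrix rank over ℂ. -/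
/-- The `k`-th mode-3 DFT frontal slice of a third-order tensor. -/
noncomputable def dft3Slice {n₁ n₂ : ℕ} (n₃ : ℕ) (T : Fin n₁ → Fin n₂ → Fin n₃ → ℂ)
    (k : Fin n₃) : Matrix (Fin n₁) (Fin n₂) ℂ :=
  Matrix.of fun i j =>
    ∑ t : Fin n₃, Complex.exp (-2 * Real.pi * Complex.I * (k : ℕ) * (t : ℕ) / (n₃ : ℕ)) * T i j t

/-- The tubal rank: the maximum over `k` of the rank of the `k`-th mode-3 DFT frontal slice. -/
noncomputable def tubalRank {n₁ n₂ : ℕ} (n₃ : ℕ) (T : Fin n₁ → Fin n₂ → Fin n₃ → ℂ) : ℕ :=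
  Finset.univ.sup fun k : Fin n₃ => (dft3Slice n₃ T k).rank

/-- The mode-3 t-product of two third-order tensors (circular convolution along mode 3). -/
noncomputable def tprod3 {n₁ n₂ n₃ r : ℕ} (A : Fin n₁ → Fin r → Fin n₃ → ℂ)
    (B : Fin r → Fin n₂ → Fin n₃ → ℂ) : Fin n₁ → Fin n₂ → Fin n₃ → ℂ :=
  fun i j k => ∑ p : Fin r, ∑ s : Fin n₃, A i p s * B p j (k - s)

theorem dft3Slice_tprod3 {n₁ n₂ n₃ r : ℕ} (A : Fin n₁ → Fin r → Fin n₃ → ℂ)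
    (B : Fin r → Fin n₂ → Fin n₃ → ℂ) (k : Fin n₃) :
    dft3Slice n₃ (tprod3 A B) k = dft3Slice n₃ A k * dft3Slice n₃ B k := by
  haveI : NeZero n₃ := ⟨k.pos.ne'⟩
  set e : ℂ := Complex.exp (-2 * Real.pi * Complex.I * (k : ℕ) / (n₃ : ℕ)) with he
  have hexp : ∀ t : ℕ,
      Complex.exp (-2 * Real.pi * Complex.I * (k : ℕ) * (t : ℕ) / (n₃ : ℕ)) = e ^ t := by
    intro t
    rw [he, ← Complex.exp_nat_mul]
    congr 1; ring
  have hen : e ^ n₃ = 1 := by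
    rw [he, ← Complex.exp_nat_mul]
    have hn : (n₃ : ℂ) ≠ 0 := Nat.cast_ne_zero.mpr (NeZero.ne n₃)
    have harg : (n₃ : ℂ) * (-2 * Real.pi * Complex.I * (k : ℕ) / (n₃ : ℕ))
        = ((-(k : ℕ) : ℤ) : ℂ) * (2 * Real.pi * Complex.I) := by
      push_cast
      field_simp
    rw [harg, Complex.exp_int_mul_two_pi_mul_I]
  have hmod : ∀ m : ℕ, e ^ (m % n₃) = e ^ m := by
    intro m
    conv_rhs => rw [← Nat.div_add_mod m n₃]
    rw [pow_add, pow_mul, hen, one_pow, one_mul]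
  ext i j
  simp only [dft3Slice, tprod3, Matrix.mul_apply, Matrix.of_apply, hexp]
  have key : ∀ (p : Fin r) (s : Fin n₃),
      ∑ t : Fin n₃, e ^ (t : ℕ) * B p j (t - s)
        = e ^ (s : ℕ) * ∑ u : Fin n₃, e ^ (u : ℕ) * B p j u := by
    intro p s
    rw [Finset.mul_sum, ← Equiv.sum_comp (Equiv.addRight s)
      (fun t => e ^ (t : ℕ) * B p j (t - s))]
    apply Finset.sum_congr rfl
    intro u _
    simp only [Equiv.coe_addRight, add_sub_cancel_right]
    rw [Fin.val_add, hmod, pow_add]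
    ring
  simp only [Finset.mul_sum]
  rw [Finset.sum_comm]
  apply Finset.sum_congr rfl
  intro p _
  simp only [Finset.sum_mul]
  rw [Finset.sum_comm]
  conv_rhs => rw [Finset.sum_comm]
  apply Finset.sum_congr rfl
  intro s _
  calc ∑ t : Fin n₃, e ^ (t : ℕ) * (A i p s * B p j (t - s))
      = A i p s * ∑ t : Fin n₃, e ^ (t : ℕ) * B p j (t - s) := by
        rw [Finset.mul_sum]; exact Finset.sum_congr rfl fun t _ => by ring
    _ = A i p s * (e ^ (s : ℕ) * ∑ u : Fin n₃, e ^ (u : ℕ) * B p j u) := by rw [key p s]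
    _ = ∑ u : Fin n₃, (e ^ (s : ℕ) * A i p s) * (e ^ (u : ℕ) * B p j u) := by
        simp only [Finset.mul_sum]
        exact Finset.sum_congr rfl fun u _ => by ring

/-- The tubal rank of a mode-3 t-product is at most the minimum of the tubal ranks
of the factors. -/
theorem tubalRank_tprod3_le (n₁ n₂ n₃ r : ℕ)
    (A : Fin n₁ → Fin r → Fin n₃ → ℂ) (B : Fin r → Fin n₂ → Fin n₃ → ℂ) :
    tubalRank n₃ (tprod3 A B) ≤ min (tubalRank n₃ A) (tubalRank n₃ B) := by
  apply le_min
  · apply Finset.sup_le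
    intro k _
    rw [dft3Slice_tprod3]
    exact le_trans (Matrix.rank_mul_le_left _ _)
      (Finset.le_sup (f := fun k => (dft3Slice n₃ A k).rank) (Finset.mem_univ k))
  · apply Finset.sup_le
    intro k _
    rw [dft3Slice_tprod3]
    exact le_trans (Matrix.rank_mul_le_right _ _)
      (Finset.le_sup (f := fun k => (dft3Slice n₃ B k).rank) (Finset.mem_univ k))
end

section
/- Let C : Fin n₁ → Fin n₂ → Fin n₃ → ℝ be a third-order tensor and F : Matrix (Fin n₁) (Fin n₁) ℝ. Define the tensor 𝓕 : Fin n₁ → Fin n₂ → Fin n₁ → ℝ by 𝓕(i,0,p) = F(i,p) and 𝓕(i,j,p) = 0 for j ≠ 0 (its first lateral slice is F and all other lateral slices are zero). Then 𝓕 *₂ C = C ×₁ F, i.e. for all i, j, k: Σ_{j'=0}^{n₂−1} Σ_{p=0}^{n₁−1} 𝓕(i,(j−j') mod n₂, p)·C(p,j',k) = Σ_{p=0}^{n₁−1} F(i,p)·C(p,j,k). -/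
/-- If the first lateral slice of `𝓕` is the matrix `F` and all its other lateral
slices are zero, then the mode-2 t-product `𝓕 *₂ C` equals the mode-1 matrix
product `C ×₁ F` (entrywise). -/
theorem tprod2_eq_mode1_mul (n₁ n₂ n₃ : ℕ) (C : Fin n₁ → Fin n₂ → Fin n₃ → ℝ)
    (F : Matrix (Fin n₁) (Fin n₁) ℝ)
    (𝓕 : Fin n₁ → Fin n₂ → Fin n₁ → ℝ)
    (h𝓕 : ∀ i j p, 𝓕 i j p = if (j : ℕ) = 0 then F i p else 0)
    (i : Fin n₁) (j : Fin n₂) (k : Fin n₃) :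
    (∑ j' : Fin n₂, ∑ p : Fin n₁, 𝓕 i (j - j') p * C p j' k)
      = ∑ p : Fin n₁, F i p * C p j k := by
  haveI : NeZero n₂ := ⟨(Fin.pos j).ne'⟩
  rw [Finset.sum_eq_single j]
  · apply Finset.sum_congr rfl
    intro p _
    rw [h𝓕, sub_self]
    simp
  · intro b _ hb
    apply Finset.sum_eq_zero
    intro p _
    rw [h𝓕]
    have : ((j - b : Fin n₂) : ℕ) ≠ 0 := by
      intro h
      apply hb
      have : (j - b : Fin n₂) = 0 := Fin.ext (by simpa using h)
      have := sub_eq_zero.mp this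
      exact this.symm
    simp [this]
  · simp
end

section
/- Let C : Fin n₁ → Fin n₂ → Fin n₃ → ℝ be a third-order tensor and G : Matrix (Fin n₂) (Fin n₂) ℝ. Define the tensor 𝓖 : Fin n₂ → Fin n₂ → Fin n₃ → ℝ by 𝓖(p,j,0) = G(j,p) and 𝓖(p,j,k) = 0 for k ≠ 0 (its first frontal slice is Gᵀ and all other frontal slices are zero). Then C *₃ 𝓖 = C ×₂ G, i.e. for all i, j, k: Σ_{p=0}^{n₂−1} Σ_{s=0}^{n₃−1} C(i,p,s)·𝓖(p,j,(k−s) mod n₃) = Σ_{p=0}^{n₂−1} G(j,p)·C(i,p,k). -/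
theorem Fintype.sum_mul_single_zero_sub {ι R : Type*} [AddGroup ι] [Fintype ι] [DecidableEq ι]
    [NonUnitalNonAssocSemiring R] (a : ι → R) (c : R) (k : ι) :
    ∑ s, a s * (Pi.single 0 c : ι → R) (k - s) = a k * c := by
  rw [Finset.sum_eq_single k]
  · rw [sub_self, Pi.single_eq_same]
  · intro s _ hsk
    rw [Pi.single_eq_of_ne (sub_ne_zero.mpr hsk.symm), mul_zero]
  · exact fun hk => (hk (Finset.mem_univ k)).elim

/-- If the first frontal slice of `𝓖` is `Gᵀ` and all its other frontal slices are
zero, then the mode-3 t-product `C *₃ 𝓖` equals the mode-2 matrix product `C ×₂ G`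
(entrywise). -/
theorem tprod3_eq_mode2_mul (n₁ n₂ n₃ : ℕ) (C : Fin n₁ → Fin n₂ → Fin n₃ → ℝ)
    (G : Matrix (Fin n₂) (Fin n₂) ℝ)
    (𝓖 : Fin n₂ → Fin n₂ → Fin n₃ → ℝ)
    (h𝓖 : ∀ p j k, 𝓖 p j k = if (k : ℕ) = 0 then G j p else 0)
    (i : Fin n₁) (j : Fin n₂) (k : Fin n₃) :
    (∑ p : Fin n₂, ∑ s : Fin n₃, C i p s * 𝓖 p j (k - s))
      = ∑ p : Fin n₂, G j p * C i p k := by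
  have : NeZero n₃ := ⟨k.pos.ne'⟩
  have h𝓖_single : ∀ p, 𝓖 p j = Pi.single 0 (G j p) := fun p => funext fun m => by
    simp only [h𝓖, Pi.single_apply, Fin.val_eq_zero_iff]
  refine Finset.sum_congr rfl fun p _ => ?_
  rw [h𝓖_single, Fintype.sum_mul_single_zero_sub, mul_comm]
end

section
/- Let C : Fin n₁ → Fin n₂ → Fin n₃ → ℝ be a third-order tensor and H : Matrix (Fin n₃) (Fin n₃) ℝ. Define the tensor 𝓗 : Fin n₁ → Fin n₃ → Fin n₃ → ℝ by 𝓗(0,s,k) = H(k,s) and 𝓗(i,s,k) = 0 for i ≠ 0 (its first horizontal slice is Hᵀ and all other horizontal slices are zero). Then C *₁ 𝓗 = C ×₃ H, i.e. for all i, j, k: Σ_{i'=0}^{n₁−1} Σ_{p=0}^{n₃−1} C((i−i') mod n₁, j, p)·𝓗(i',p,k) = Σ_{p=0}^{n₃−1} H(k,p)·C(i,j,p). -/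
/-- If the first horizontal slice of `𝓗` is `Hᵀ` and all its other horizontal
slices are zero, then the mode-1 t-product `C *₁ 𝓗` equals the mode-3 matrix
product `C ×₃ H` (entrywise). -/
theorem tprod1_eq_mode3_mul (n₁ n₂ n₃ : ℕ) (C : Fin n₁ → Fin n₂ → Fin n₃ → ℝ)
    (H : Matrix (Fin n₃) (Fin n₃) ℝ)
    (𝓗 : Fin n₁ → Fin n₃ → Fin n₃ → ℝ)
    (h𝓗 : ∀ i s k, 𝓗 i s k = if (i : ℕ) = 0 then H k s else 0)
    (i : Fin n₁) (j : Fin n₂) (k : Fin n₃) :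
    (∑ i' : Fin n₁, ∑ p : Fin n₃, C (i - i') j p * 𝓗 i' p k)
      = ∑ p : Fin n₃, H k p * C i j p := by
  have : NeZero n₁ := ⟨i.pos.ne'⟩
  rw [Finset.sum_eq_single (0 : Fin n₁)]
  · simp [h𝓗, mul_comm]
  · intro b _ hb
    apply Finset.sum_eq_zero
    intro p _
    have : (b : ℕ) ≠ 0 := fun h => hb (Fin.ext h)
    simp [h𝓗, this]
  · simp
end

section
/- Let E be a finite-dimensional real inner product space, z : ℕ → E a sequence, f : E → ℝ, G : E → E, z* ∈ E, and constants a > 0, η > 0, μ > 0, θ ∈ (0,1), σ > 0; set ρ = a/(2η). Assume: (i) for all t, f(z^t) − f(z^{t+1}) ≥ (a/2)·‖z^{t+1} − z^t‖²; (ii) for all t, ‖G(z^t)‖ ≤ η·‖z^t − z^{t+1}‖; (iii) (KL inequality) for all z with ‖z − z*‖ < σ, |f(z) − f(z*)|^θ ≤ μ·‖G(z)‖; (iv) for all t, f(z^t) ≥ f(z*); (v) ‖z⁰ − z*‖ < σ and σ > (μ/(ρ·(1−θ)))·(f(z⁰) − f(z*))^{1−θ} + ‖z⁰ − z*‖. Then: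 (1) for every t, ‖z^t − z*‖ < σ; (2) Σ_{t=0}^{∞} ‖z^{t+1} − z^t‖ ≤ (μ/(ρ·(1−θ)))·(f(z⁰) − f(z*))^{1−θ}; (3) the sequence {z^t} converges. -/
open Real in
/-- Concavity estimate: for `0 < x`, `0 ≤ y`, `0 < θ < 1`,
`(1-θ)*(x-y) ≤ x^θ * (x^(1-θ) - y^(1-θ))`. -/
lemma kl_concavity_aux {x y θ : ℝ} (hx : 0 < x) (hy : 0 ≤ y)
    (hθ0 : 0 < θ) (hθ1 : θ < 1) :
    (1 - θ) * (x - y) ≤ x ^ θ * (x ^ (1 - θ) - y ^ (1 - θ)) := by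
  have h1θ : 0 < 1 - θ := by linarith
  have hxne : x ≠ 0 := ne_of_gt hx
  have hber : (1 + (y / x - 1)) ^ (1 - θ) ≤ 1 + (1 - θ) * (y / x - 1) :=
    rpow_one_add_le_one_add_mul_self
      (by have : 0 ≤ y / x := div_nonneg hy hx.le; linarith) h1θ.le (by linarith)
  have h1p : (1 : ℝ) + (y / x - 1) = y / x := by ring
  rw [h1p] at hber
  have hpq : x ^ (1 - θ) * x ^ θ = x := by
    rw [← Real.rpow_add hx]; norm_num
  have hsplit : y ^ (1 - θ) = x ^ (1 - θ) * (y / x) ^ (1 - θ) := by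
    rw [← Real.mul_rpow hx.le (div_nonneg hy hx.le), mul_div_cancel₀ y hxne]
  have hkey : x ^ θ * y ^ (1 - θ) ≤ x + (1 - θ) * (y - x) := by
    have h2 : x ^ θ * y ^ (1 - θ) = x * (y / x) ^ (1 - θ) := by
      rw [hsplit, ← mul_assoc, mul_comm (x ^ θ), hpq]
    rw [h2]
    calc x * (y / x) ^ (1 - θ) ≤ x * (1 + (1 - θ) * (y / x - 1)) :=
          mul_le_mul_of_nonneg_left hber hx.le
      _ = x + (1 - θ) * (y - x) := by field_simp <;> ring
  nlinarith [hpq]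

open Real in
/-- Single-step estimate for the KL descent argument. -/
lemma kl_step_aux {a η μ θ s x y : ℝ}
    (ha : 0 < a) (hη : 0 < η) (hμ : 0 < μ) (hθ0 : 0 < θ) (hθ1 : θ < 1)
    (hs : 0 ≤ s) (hy : 0 ≤ y) (hxy : a / 2 * s ^ 2 ≤ x - y)
    (hKLs : x ^ θ ≤ μ * η * s) :
    s ≤ μ / (a / (2 * η) * (1 - θ)) * x ^ (1 - θ)
        - μ / (a / (2 * η) * (1 - θ)) * y ^ (1 - θ) := by
  have h1θ : 0 < 1 - θ := by linarith
  set c : ℝ := μ / (a / (2 * η) * (1 - θ)) with hc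
  have hcpos : 0 < c := by rw [hc]; positivity
  have hceq : c * ((1 - θ) * (a / 2)) = μ * η := by
    rw [hc]; field_simp
  rcases eq_or_lt_of_le hs with hs0 | hspos
  · -- s = 0 : then x ≤ 0 is impossible unless x = 0
    subst hs0
    simp only [mul_zero] at hKLs
    norm_num at hxy
    have hx0 : x ≤ 0 := by
      by_contra h
      push_neg at h
      have := Real.rpow_pos_of_pos h θ
      linarith
    have hx : x = 0 := le_antisymm hx0 (by linarith)
    have hy0 : y = 0 := le_antisymm (by linarith) hy
    rw [hx, hy0, Real.zero_rpow (ne_of_gt h1θ)]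
    norm_num
  · have hxpos : 0 < x := by
      have := mul_pos (half_pos ha) (pow_pos hspos 2)
      linarith
    have hconc := kl_concavity_aux hxpos hy hθ0 hθ1
    have hppos : 0 < x ^ θ := Real.rpow_pos_of_pos hxpos θ
    have hgoal : s * x ^ θ ≤ (c * x ^ (1 - θ) - c * y ^ (1 - θ)) * x ^ θ := by
      have h3 : s * x ^ θ ≤ μ * η * s ^ 2 := by nlinarith
      have h4 : μ * η * s ^ 2 ≤ c * (x ^ θ * (x ^ (1 - θ) - y ^ (1 - θ))) := by
        have h5 : c * ((1 - θ) * (x - y)) ≤ c * (x ^ θ * (x ^ (1 - θ) - y ^ (1 - θ))) :=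
          mul_le_mul_of_nonneg_left hconc hcpos.le
        have h6 : c * ((1 - θ) * (a / 2)) * s ^ 2 = μ * η * s ^ 2 := by rw [hceq]
        have h7 : c * ((1 - θ) * (a / 2 * s ^ 2)) ≤ c * ((1 - θ) * (x - y)) := by
          gcongr
        linarith
      calc s * x ^ θ ≤ μ * η * s ^ 2 := h3
        _ ≤ c * (x ^ θ * (x ^ (1 - θ) - y ^ (1 - θ))) := h4
        _ = (c * x ^ (1 - θ) - c * y ^ (1 - θ)) * x ^ θ := by ring
    exact le_of_mul_le_mul_right hgoal hppos

/-- Abstract KL-type convergence result: under sufficient decrease, relative error,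
the KL inequality near `zstar`, and a suitable starting condition, the iterates stay
in the ball, the step lengths are summable with the stated bound, and the sequence
converges. -/
theorem kl_convergence {E : Type*} [NormedAddCommGroup E] [InnerProductSpace ℝ E]
    [FiniteDimensional ℝ E]
    (z : ℕ → E) (f : E → ℝ) (G : E → E) (zstar : E)
    (a η μ θ σ ρ : ℝ)
    (ha : 0 < a) (hη : 0 < η) (hμ : 0 < μ) (hθ0 : 0 < θ) (hθ1 : θ < 1) (hσ : 0 < σ)
    (hρ : ρ = a / (2 * η))
    (hdec : ∀ t : ℕ, f (z t) - f (z (t + 1)) ≥ a / 2 * ‖z (t + 1) - z t‖ ^ 2)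
    (hgrad : ∀ t : ℕ, ‖G (z t)‖ ≤ η * ‖z t - z (t + 1)‖)
    (hKL : ∀ w : E, ‖w - zstar‖ < σ → |f w - f zstar| ^ θ ≤ μ * ‖G w‖)
    (hlb : ∀ t : ℕ, f (z t) ≥ f zstar)
    (h0 : ‖z 0 - zstar‖ < σ)
    (hσbig : σ > μ / (ρ * (1 - θ)) * (f (z 0) - f zstar) ^ (1 - θ) + ‖z 0 - zstar‖) :
    (∀ t : ℕ, ‖z t - zstar‖ < σ) ∧
    (Summable (fun t : ℕ => ‖z (t + 1) - z t‖) ∧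
      (∑' t : ℕ, ‖z (t + 1) - z t‖)
        ≤ μ / (ρ * (1 - θ)) * (f (z 0) - f zstar) ^ (1 - θ)) ∧
    (∃ l : E, Filter.Tendsto z Filter.atTop (nhds l)) := by
  subst hρ
  have h1θ : 0 < 1 - θ := by linarith
  have hx : ∀ t, 0 ≤ f (z t) - f zstar := fun t => by linarith [hlb t]
  set c : ℝ := μ / (a / (2 * η) * (1 - θ)) with hc
  have hcpos : 0 < c := by rw [hc]; positivity
  have hΔnn : ∀ t : ℕ, 0 ≤ c * (f (z t) - f zstar) ^ (1 - θ) := fun t => by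
    have := Real.rpow_nonneg (hx t) (1 - θ)
    positivity
  -- key per-step estimate
  have key : ∀ t, ‖z t - zstar‖ < σ → ‖z (t + 1) - z t‖ ≤
      c * (f (z t) - f zstar) ^ (1 - θ) - c * (f (z (t + 1)) - f zstar) ^ (1 - θ) := by
    intro t hball
    apply kl_step_aux ha hη hμ hθ0 hθ1 (norm_nonneg _) (hx (t + 1)) (by linarith [hdec t])
    have hKLt := hKL (z t) hball
    rw [abs_of_nonneg (hx t)] at hKLt
    have hGt := hgrad t
    rw [norm_sub_rev] at hGt
    calc (f (z t) - f zstar) ^ θ ≤ μ * ‖G (z t)‖ := hKLt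
      _ ≤ μ * (η * ‖z (t + 1) - z t‖) := mul_le_mul_of_nonneg_left hGt hμ.le
      _ = μ * η * ‖z (t + 1) - z t‖ := by ring
  -- induction: iterates stay in the ball, partial sums are bounded
  have main : ∀ n : ℕ, ‖z n - zstar‖ < σ ∧
      ∑ t ∈ Finset.range n, ‖z (t + 1) - z t‖ ≤
        c * (f (z 0) - f zstar) ^ (1 - θ) - c * (f (z n) - f zstar) ^ (1 - θ) := by
    intro n
    induction n with
    | zero => simpa using h0
    | succ n ih =>
      obtain ⟨hb, hsum⟩ := ih
      have hk := key n hb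
      have hsum' : ∑ t ∈ Finset.range (n + 1), ‖z (t + 1) - z t‖ ≤
          c * (f (z 0) - f zstar) ^ (1 - θ) - c * (f (z (n + 1)) - f zstar) ^ (1 - θ) := by
        rw [Finset.sum_range_succ]
        linarith
      refine ⟨?_, hsum'⟩
      have htel : z (n + 1) - zstar
          = (∑ t ∈ Finset.range (n + 1), (z (t + 1) - z t)) + (z 0 - zstar) := by
        rw [Finset.sum_range_sub (fun i => z i)]
        abel
      calc ‖z (n + 1) - zstar‖
          ≤ ‖∑ t ∈ Finset.range (n + 1), (z (t + 1) - z t)‖ + ‖z 0 - zstar‖ := by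
            rw [htel]; exact norm_add_le _ _
        _ ≤ (∑ t ∈ Finset.range (n + 1), ‖z (t + 1) - z t‖) + ‖z 0 - zstar‖ := by
            gcongr; exact norm_sum_le _ _
        _ ≤ c * (f (z 0) - f zstar) ^ (1 - θ) + ‖z 0 - zstar‖ := by
            have := hΔnn (n + 1)
            linarith
        _ < σ := by linarith [hσbig]
  have hball : ∀ t : ℕ, ‖z t - zstar‖ < σ := fun t => (main t).1
  have hbound : ∀ n : ℕ, ∑ t ∈ Finset.range n, ‖z (t + 1) - z t‖
      ≤ c * (f (z 0) - f zstar) ^ (1 - θ) := fun n => by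
    have h1 := (main n).2
    have h2 := hΔnn n
    linarith
  have hsummable : Summable (fun t : ℕ => ‖z (t + 1) - z t‖) :=
    summable_of_sum_range_le (fun n => norm_nonneg _) hbound
  have htsum : (∑' t : ℕ, ‖z (t + 1) - z t‖) ≤ c * (f (z 0) - f zstar) ^ (1 - θ) :=
    Real.tsum_le_of_sum_range_le (fun n => norm_nonneg _) hbound
  refine ⟨hball, ⟨hsummable, htsum⟩, ?_⟩
  have hcauchy : CauchySeq z := by
    apply cauchySeq_of_summable_dist
    have heq : (fun n : ℕ => dist (z n) (z n.succ)) = fun n : ℕ => ‖z (n + 1) - z n‖ := by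
      funext n
      rw [dist_eq_norm, norm_sub_rev]
    rw [heq]
    exact hsummable
  exact cauchySeq_tendsto_of_complete hcauchy
end

section
/- Let E be a real normed space, z : ℕ → E a sequence such that Σ_{p=0}^{∞} ‖z^{p+1} − z^p‖ < ∞ and z^t converges to z* ∈ E, and define Δ_t = Σ_{p=t}^{∞} ‖z^{p+1} − z^p‖. Let θ ∈ (0, 1/2] and c₁ > 0, and assume Δ_t ≤ c₁·(Δ_t − Δ_{t+1})^{(1−θ)/θ} for every t. Then there exist γ > 0 and c ∈ (0,1) such that ‖z^t − z*‖ ≤ γ·c^t for all t. -/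
/-- If the tails `Δ_t = Σ_{p≥t} ‖z^{p+1} − z^p‖` satisfy
`Δ_t ≤ c₁·(Δ_t − Δ_{t+1})^{(1−θ)/θ}` with `θ ∈ (0, 1/2]`, then the sequence
converges linearly: `‖z^t − z*‖ ≤ γ·c^t` for some `γ > 0` and `c ∈ (0,1)`. -/
theorem linear_rate_of_tail_ineq {E : Type*} [NormedAddCommGroup E] [NormedSpace ℝ E]
    (z : ℕ → E) (zstar : E)
    (hsum : Summable fun p : ℕ => ‖z (p + 1) - z p‖)
    (hconv : Filter.Tendsto z Filter.atTop (nhds zstar))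
    (Δ : ℕ → ℝ) (hΔ : ∀ t : ℕ, Δ t = ∑' p : ℕ, ‖z (t + p + 1) - z (t + p)‖)
    (θ c₁ : ℝ) (hθ0 : 0 < θ) (hθ : θ ≤ 1 / 2) (hc₁ : 0 < c₁)
    (h : ∀ t : ℕ, Δ t ≤ c₁ * (Δ t - Δ (t + 1)) ^ ((1 - θ) / θ)) :
    ∃ γ > (0 : ℝ), ∃ c ∈ Set.Ioo (0 : ℝ) 1, ∀ t : ℕ, ‖z t - zstar‖ ≤ γ * c ^ t := by
  set f : ℕ → ℝ := fun p => ‖z (p + 1) - z p‖ with hf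
  have hf0 : ∀ p, 0 ≤ f p := fun p => norm_nonneg _
  have hsum_t : ∀ t : ℕ, Summable fun p => f (t + p) := fun t =>
    hsum.comp_injective (add_right_injective t)
  have hΔ' : ∀ t, Δ t = ∑' p : ℕ, f (t + p) := by
    intro t; rw [hΔ t]
  have hΔ0 : ∀ t, 0 ≤ Δ t := by
    intro t; rw [hΔ' t]; exact tsum_nonneg fun p => hf0 _
  have hstep : ∀ t, Δ t = f t + Δ (t + 1) := by
    intro t
    rw [hΔ' t, hΔ' (t + 1), Summable.tsum_eq_zero_add (hsum_t t)]
    congr 1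
    apply tsum_congr; intro p; congr 1; omega
  -- ‖z t - zstar‖ ≤ Δ t
  have hnorm : ∀ t, ‖z t - zstar‖ ≤ Δ t := by
    intro t
    have hpart : ∀ n : ℕ, ‖z (t + n) - z t‖ ≤ Δ t := by
      intro n
      have htel : z (t + n) - z t = ∑ p ∈ Finset.range n, (z (t + (p + 1)) - z (t + p)) := by
        rw [Finset.sum_range_sub (fun p => z (t + p))]
        simp
      calc ‖z (t + n) - z t‖ ≤ ∑ p ∈ Finset.range n, ‖z (t + (p + 1)) - z (t + p)‖ := by
            rw [htel]; exact norm_sum_le _ _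
        _ = ∑ p ∈ Finset.range n, f (t + p) := by
            apply Finset.sum_congr rfl; intro p _; simp only [hf]; congr 2 <;> omega
        _ ≤ ∑' p, f (t + p) := Summable.sum_le_tsum _ (fun p _ => hf0 _) (hsum_t t)
        _ = Δ t := (hΔ' t).symm
    have hlim : Filter.Tendsto (fun n : ℕ => ‖z (t + n) - z t‖) Filter.atTop
        (nhds ‖zstar - z t‖) := by
      have h1 : Filter.Tendsto (fun n : ℕ => z (t + n)) Filter.atTop (nhds zstar) := by
        have : Filter.Tendsto (fun n : ℕ => t + n) Filter.atTop Filter.atTop := by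
          exact Filter.tendsto_atTop_mono (fun n => Nat.le_add_left n t) Filter.tendsto_id
        exact hconv.comp this
      exact ((h1.sub_const (z t)).norm)
    have := le_of_tendsto hlim (Filter.Eventually.of_forall hpart)
    rwa [norm_sub_rev]
  -- Δ tends to 0
  have htend : Filter.Tendsto Δ Filter.atTop (nhds 0) := by
    have := tendsto_sum_nat_add f
    have heq : (fun i : ℕ => ∑' k, f (k + i)) = Δ := by
      funext i; rw [hΔ' i]; apply tsum_congr; intro p; rw [add_comm]
    rwa [heq] at this
  obtain ⟨T, hT⟩ : ∃ T : ℕ, ∀ t ≥ T, Δ t < 1 := by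
    have := htend.eventually_lt_const (by norm_num : (0:ℝ) < 1)
    rw [Filter.eventually_atTop] at this
    exact this
  -- the contraction factor
  set c : ℝ := max ((c₁ - 1) / c₁) (1 / 2) with hc
  have hc0 : 0 < c := lt_of_lt_of_le (by norm_num) (le_max_right _ _)
  have hc1 : c < 1 := by
    apply max_lt _ (by norm_num)
    rw [div_lt_one hc₁]; linarith
  have hα : (1 : ℝ) ≤ (1 - θ) / θ := by
    rw [le_div_iff₀ hθ0]; linarith
  -- contraction for t ≥ T
  have hcontr : ∀ t ≥ T, Δ (t + 1) ≤ c * Δ t := by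
    intro t ht
    have hft : Δ t - Δ (t + 1) = f t := by rw [hstep t]; ring
    have hx0 : 0 ≤ f t := hf0 t
    have hx1 : f t ≤ 1 := by
      have : f t ≤ Δ t := by rw [hstep t]; linarith [hΔ0 (t + 1)]
      exact this.trans (hT t ht).le
    have hpow : (Δ t - Δ (t + 1)) ^ ((1 - θ) / θ) ≤ f t := by
      rw [hft]
      rcases eq_or_lt_of_le hx0 with h0 | h0
      · rw [← h0, Real.zero_rpow (by positivity)]
      · calc (f t) ^ ((1 - θ) / θ) ≤ (f t) ^ (1 : ℝ) :=
              Real.rpow_le_rpow_of_exponent_ge h0 hx1 hα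
          _ = f t := Real.rpow_one _
    have hkey : Δ t ≤ c₁ * f t := (h t).trans (by nlinarith)
    have : Δ (t + 1) = Δ t - f t := by rw [hstep t]; ring
    rw [this]
    have h1 : f t ≥ Δ t / c₁ := by rw [ge_iff_le, div_le_iff₀ hc₁]; linarith
    have h2 : Δ t - f t ≤ Δ t * ((c₁ - 1) / c₁) := by
      have heq : Δ t * ((c₁ - 1) / c₁) = Δ t - Δ t / c₁ := by field_simp
      rw [heq]; linarith
    calc Δ t - f t ≤ Δ t * ((c₁ - 1) / c₁) := h2
      _ ≤ Δ t * c := mul_le_mul_of_nonneg_left (le_max_left _ _) (hΔ0 t)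
      _ = c * Δ t := mul_comm _ _
  -- geometric decay for t ≥ T
  have hgeo : ∀ n : ℕ, Δ (T + n) ≤ Δ T * c ^ n := by
    intro n
    induction n with
    | zero => simp
    | succ n ih =>
      have := hcontr (T + n) (Nat.le_add_right T n)
      calc Δ (T + (n + 1)) = Δ (T + n + 1) := by ring_nf
        _ ≤ c * Δ (T + n) := this
        _ ≤ c * (Δ T * c ^ n) := mul_le_mul_of_nonneg_left ih hc0.le
        _ = Δ T * c ^ (n + 1) := by ring
  -- Δ is antitone
  have hanti : Antitone Δ :=
    antitone_nat_of_succ_le fun n => by rw [hstep n]; linarith [hf0 n]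
  refine ⟨(Δ 0 + 1) / c ^ T, div_pos (by linarith [hΔ0 0]) (pow_pos hc0 T), c, ⟨hc0, hc1⟩, fun t => ?_⟩
  refine (hnorm t).trans ?_
  rcases Nat.lt_or_ge t T with ht | ht
  · have h1 : Δ t ≤ Δ 0 := hanti (Nat.zero_le t)
    have h2 : c ^ T ≤ c ^ t := pow_le_pow_of_le_one hc0.le hc1.le ht.le
    rw [div_mul_eq_mul_div, le_div_iff₀ (by positivity)]
    calc Δ t * c ^ T ≤ Δ t * c ^ t := mul_le_mul_of_nonneg_left h2 (hΔ0 t)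
      _ ≤ (Δ 0 + 1) * c ^ t :=
          mul_le_mul_of_nonneg_right (by linarith) (pow_nonneg hc0.le t)
  · obtain ⟨n, rfl⟩ := Nat.exists_eq_add_of_le ht
    have h1 : Δ (T + n) ≤ Δ T * c ^ n := hgeo n
    have h2 : Δ T ≤ Δ 0 := hanti (Nat.zero_le T)
    rw [div_mul_eq_mul_div, le_div_iff₀ (by positivity), pow_add]
    calc Δ (T + n) * c ^ T ≤ (Δ T * c ^ n) * c ^ T :=
          mul_le_mul_of_nonneg_right h1 (pow_nonneg hc0.le T)
      _ ≤ ((Δ 0 + 1) * c ^ n) * c ^ T :=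
          mul_le_mul_of_nonneg_right
            (mul_le_mul_of_nonneg_right (by linarith) (pow_nonneg hc0.le n))
            (pow_nonneg hc0.le T)
      _ = (Δ 0 + 1) * (c ^ T * c ^ n) := by ring
end
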